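/- Let m be even. The uniform average over all permutations π of [m] of the measures P̂_{m,π} equals the (m/2)-out-of-m measure: for every ω ∈ {0,1}^m, (1/m!) Σ_π P̂_{m,π}(ω) = P_{m/2,m}(ω). -/

import Mathlib

open scoped Classical

/-- The cylinder `[ω]_S`: all configurations agreeing with `ω` on `S`. -/
def cyl {ι : Type*} (ω : ι → Bool) (S : Finset ι) : Set (ι → Bool) :=
  {α | ∀ i ∈ S, α i = ω i}

/-- Disjoint occurrence `A □ B`. -/
def boxOp {ι : Type*} (A B : Set (ι → Bool)) : Set (ι → Bool) :=
  {ω | ∃ K L : Finset ι, Disjoint K L ∧ cyl ω K ⊆ A ∧ cyl ω L ⊆ B}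

/-- An increasing event. -/
def IsIncreasing {ι : Type*} (A : Set (ι → Bool)) : Prop :=
  ∀ ⦃ω ω' : ι → Bool⦄, ω ∈ A → (∀ i, ω i ≤ ω' i) → ω' ∈ A

/-- Number of coordinates equal to 1 (`true`). -/
def ones {ι : Type*} [Fintype ι] (ω : ι → Bool) : ℕ :=
  (Finset.univ.filter fun i => ω i = true).card

/-- The probability of an event `A` under the weight function `μ`. -/
noncomputable def mass {ι : Type*} [Fintype ι] [DecidableEq ι]
    (μ : (ι → Bool) → ℝ) (A : Set (ι → Bool)) : ℝ :=
  ∑ ω : ι → Bool, if ω ∈ A then μ ω else 0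

/-- The uniform probability weight on a set `S` of configurations, `0` elsewhere. -/
noncomputable def uniformOn {ι : Type*} (S : Set (ι → Bool)) : (ι → Bool) → ℝ :=
  fun ω => if ω ∈ S then ((S.ncard : ℝ))⁻¹ else 0

/-- The `k`-out-of-`n` measure: uniform on configurations with exactly `k` ones. -/
noncomputable def kOutOf (n k : ℕ) : (Fin n → Bool) → ℝ :=
  uniformOn {ω : Fin n → Bool | ones ω = k}

/-- Coordinatewise flip `ω̄`. -/
def flipC {ι : Type*} (ω : ι → Bool) : ι → Bool := fun i => !ω i

/-- `Ω̂_{m,π}`: configurations `ω` such that for each pair of indices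
`(π(2j), π(2j+1))` (0-based), the values `(ω_{π(2j)}, ω_{π(2j+1)})` are `(0,1)` or `(1,0)`. -/
def hatOmegaPerm (m : ℕ) (π : Equiv.Perm (Fin m)) : Set (Fin m → Bool) :=
  {ω | ∀ j : ℕ, ∀ h : 2 * j + 1 < m, ω (π ⟨2 * j, by omega⟩) ≠ ω (π ⟨2 * j + 1, h⟩)}

/-! The average `μ ω = (m!)⁻¹ ∑ π, P̂_{m,π} ω` is a probability weight, and it is exchangeable:
precomposing `ω` with `σ` amounts to replacing `π` by `σ * π` in the sum. Every configuration
in some `Ω̂_{m,π}` has exactly `m / 2` ones, one in each pair, so `μ` lives on that level of the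
cube. Permutations act transitively on each level, so an exchangeable probability weight
on a single level is uniform there. -/

lemma uniformOn_preimage_comp_perm {ι : Type*} (S : Set (ι → Bool)) (σ : Equiv.Perm ι)
    (ω : ι → Bool) : uniformOn ((· ∘ σ) ⁻¹' S) ω = uniformOn S (ω ∘ σ) := by
  have hinj : Function.Injective fun α : ι → Bool => α ∘ σ := σ.surjective.injective_comp_right
  have hrange : S ⊆ Set.range fun α : ι → Bool => α ∘ σ :=
    fun β _ => ⟨β ∘ σ.symm, by funext i; simp⟩
  simp only [uniformOn, Set.ncard_preimage_of_injective_subset_range hinj hrange, Set.mem_preimage]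

section Exchangeable

variable {ι : Type*} [Fintype ι]

lemma exists_perm_comp_eq_of_ones_eq {ω α : ι → Bool} (h : ones ω = ones α) :
    ∃ σ : Equiv.Perm ι, ω ∘ σ = α := by
  have hcard : Fintype.card {i // α i = true} = Fintype.card {i // ω i = true} := by
    simp only [Fintype.card_subtype]; exact h.symm
  have hcard' : Fintype.card {i // ¬α i = true} = Fintype.card {i // ¬ω i = true} := by
    simp only [Fintype.card_subtype_compl, hcard]
  refine ⟨Equiv.subtypeCongr (Fintype.equivOfCardEq hcard) (Fintype.equivOfCardEq hcard'), ?_⟩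
  funext i
  by_cases hi : α i = true
  · simpa [Equiv.subtypeCongr, Equiv.sumCompl_symm_apply_of_pos hi, hi] using
      (Fintype.equivOfCardEq hcard ⟨i, hi⟩).2
  · simpa [Equiv.subtypeCongr, Equiv.sumCompl_symm_apply_of_neg hi, hi] using
      (Fintype.equivOfCardEq hcard' ⟨i, hi⟩).2

lemma card_filter_ones_eq (k : ℕ) :
    (Finset.univ.filter fun ω : ι → Bool => ones ω = k).card = (Fintype.card ι).choose k := by
  rw [← Finset.card_univ, ← Finset.card_powersetCard]
  refine Finset.card_bij' (fun ω _ => Finset.univ.filter fun i => ω i = true)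
    (fun s _ i => decide (i ∈ s)) ?_ ?_ ?_ ?_
  · intro ω hω
    rw [Finset.mem_filter] at hω
    simpa [ones] using hω
  · intro s hs
    rw [Finset.mem_filter]
    simpa [ones] using hs
  · intro ω _; funext i; simp
  · intro s _; ext i; simp

lemma ncard_setOf_ones_eq (k : ℕ) :
    {ω : ι → Bool | ones ω = k}.ncard = (Fintype.card ι).choose k := by
  rw [Set.ncard_eq_toFinset_card', Set.toFinset_ofPred, card_filter_ones_eq]

lemma sum_uniformOn {S : Set (ι → Bool)} (hS : S.Nonempty) : ∑ ω, uniformOn S ω = 1 := by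
  have hcard : (Finset.univ.filter (· ∈ S)).card = S.ncard := by
    rw [Set.ncard_eq_toFinset_card']; congr 1; ext; simp
  simp only [uniformOn]
  rw [Finset.sum_ite, Finset.sum_const_zero, add_zero, Finset.sum_const, nsmul_eq_mul, hcard]
  exact mul_inv_cancel₀ (Nat.cast_ne_zero.2 ((Set.ncard_pos S.toFinite).2 hS).ne')

theorem eq_uniformOn_ones_of_comp_perm_eq {μ : (ι → Bool) → ℝ} {k : ℕ}
    (hperm : ∀ (σ : Equiv.Perm ι) ω, μ (ω ∘ σ) = μ ω) (hsupp : ∀ ω, ones ω ≠ k → μ ω = 0)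
    (hsum : ∑ ω, μ ω = 1) (ω : ι → Bool) : μ ω = uniformOn {ω | ones ω = k} ω := by
  by_cases hω : ones ω = k
  · have hconst : ∀ α ∈ Finset.univ.filter fun α : ι → Bool => ones α = k, μ α = μ ω := by
      intro α hα
      obtain ⟨σ, rfl⟩ := exists_perm_comp_eq_of_ones_eq (hω.trans (Finset.mem_filter.1 hα).2.symm)
      exact hperm σ ω
    have hmul : ((Fintype.card ι).choose k : ℝ) * μ ω = 1 := by
      rw [← hsum, ← Finset.sum_filter_of_ne fun α _ h => not_imp_comm.1 (hsupp α) h,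
        Finset.sum_congr rfl hconst, Finset.sum_const, card_filter_ones_eq, nsmul_eq_mul]
    simp only [uniformOn, Set.mem_ofPred_eq, hω, if_true, ncard_setOf_ones_eq]
    exact eq_inv_of_mul_eq_one_right hmul
  · simp only [hsupp ω hω, uniformOn, Set.mem_ofPred_eq, hω, if_false]

end Exchangeable

section HatOmega

variable {m : ℕ}

lemma hatOmegaPerm_mul (σ π : Equiv.Perm (Fin m)) :
    hatOmegaPerm m (σ * π) = (· ∘ σ) ⁻¹' hatOmegaPerm m π :=
  rfl

lemma hatOmegaPerm_nonempty (π : Equiv.Perm (Fin m)) : (hatOmegaPerm m π).Nonempty :=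
  ⟨fun i => decide (Even (π.symm i : ℕ)), fun j _ => by simp⟩

def pairIndex {n : ℕ} (hn : m = n + n) : Fin n × Fin 2 ≃ Fin m :=
  finProdFinEquiv.trans (finCongr (by omega))

lemma pairIndex_apply_val {n : ℕ} (hn : m = n + n) (j : Fin n) (b : Fin 2) :
    (pairIndex hn (j, b) : ℕ) = 2 * j + b := by
  simp [pairIndex, add_comm]

lemma ones_eq_of_mem_hatOmegaPerm {n : ℕ} (hn : m = n + n) {π : Equiv.Perm (Fin m)}
    {ω : Fin m → Bool} (hω : ω ∈ hatOmegaPerm m π) : ones ω = n := by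
  have hpair : ∀ j : Fin n, (∑ b : Fin 2, if ω (π (pairIndex hn (j, b))) then 1 else 0) = 1 := by
    intro j
    have hne := hω j (by omega)
    rw [Fin.sum_univ_two]
    have h0 : pairIndex hn (j, 0) = ⟨2 * j, by omega⟩ := Fin.ext (by simp [pairIndex_apply_val])
    have h1 : pairIndex hn (j, 1) = ⟨2 * j + 1, by omega⟩ := Fin.ext (by simp [pairIndex_apply_val])
    rw [h0, h1]
    revert hne
    cases ω (π ⟨2 * j, _⟩) <;> cases ω (π ⟨2 * j + 1, _⟩) <;> simp
  calc ones ω = ∑ i, if ω i then 1 else 0 := by rw [ones, Finset.card_filter]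
    _ = ∑ p : Fin n × Fin 2, if ω (π (pairIndex hn p)) then 1 else 0 :=
      (Equiv.sum_comp ((pairIndex hn).trans π) _).symm
    _ = n := by rw [Fintype.sum_prod_type, Finset.sum_congr rfl fun j _ => hpair j]; simp

lemma sum_uniformOn_hatOmegaPerm_comp_perm (σ : Equiv.Perm (Fin m)) (ω : Fin m → Bool) :
    ∑ π, uniformOn (hatOmegaPerm m π) (ω ∘ σ) = ∑ π, uniformOn (hatOmegaPerm m π) ω := by
  simp only [← uniformOn_preimage_comp_perm, ← hatOmegaPerm_mul]
  exact Equiv.sum_comp (Equiv.mulLeft σ) (fun π => uniformOn (hatOmegaPerm m π) ω)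

end HatOmega

/-- The uniform average over all permutations `π` of the measures `P̂_{m,π}` is the
`(m/2)`-out-of-`m` measure. -/
theorem average_hat_perm_eq_half_out_of_m (m : ℕ) (hm : Even m) (ω : Fin m → Bool) :
    (m.factorial : ℝ)⁻¹ * ∑ π : Equiv.Perm (Fin m), uniformOn (hatOmegaPerm m π) ω =
      kOutOf m (m / 2) ω := by
  obtain ⟨n, hn⟩ := hm
  have hhalf : m / 2 = n := by omega
  rw [kOutOf, hhalf]
  refine eq_uniformOn_ones_of_comp_perm_eq
    (μ := fun ω => (m.factorial : ℝ)⁻¹ * ∑ π, uniformOn (hatOmegaPerm m π) ω) ?_ ?_ ?_ ω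
  · intro σ α
    rw [sum_uniformOn_hatOmegaPerm_comp_perm]
  · intro α hα
    have hzero : ∀ π, uniformOn (hatOmegaPerm m π) α = 0 := fun π =>
      if_neg fun hπ => hα (ones_eq_of_mem_hatOmegaPerm hn hπ)
    simp [hzero]
  · rw [← Finset.mul_sum, Finset.sum_comm]
    simp [sum_uniformOn (hatOmegaPerm_nonempty _), Fintype.card_perm, Nat.factorial_ne_zero]
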